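/- arXiv:1612.05984 — 5 statements merged into one kernel-verified Lean document; each statement's English description precedes it below -/
import Mathlib

section
/- Let (E,d) be a metric space and H ∈ (0,1). Let P_1,…,P_n ∈ E (n ≥ 2) be distinct points and c_1,…,c_n nonzero real numbers forming an H-critical configuration, i.e. ∑_{i=1}^n c_i = 0 and ∑_{i,j=1}^n c_i c_j d(P_i,P_j)^{2H} = 0. Suppose moreover that there exist a sequence of points (Q_m) in E, a sequence of positive reals ε_m converging to 0, and a constant C ≥ 0 such that d(P_n, Q_m) = ε_m for all m and |d(P_i, Q_m) − d(P_i, P_n)| ≤ C·ε_m² for all i ∈ {1,…,n−1} and all m. Then the kernel (x,y) ↦ d(x,y)^{2H} is not a negative definite kernel on E; explicitly, for all sufficiently large m, the points (P_1,…,P_{n−1}, P_n, Q_m) with coefficients (c_1,…,c_{n−1}, c_n/2, c_n/2) (which sum to zero) satisfy ∑_{i,j} c'_i c'_j d^{2H} > 0. -/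
open Filter Finset

/-- A symmetric kernel `f` on `E` is negative definite if for every finite family of
points and real coefficients summing to zero, the associated quadratic form is `≤ 0`. -/
def IsNegDefKernel {E : Type*} (f : E → E → ℝ) : Prop :=
  ∀ (k : ℕ) (x : Fin k → E) (lam : Fin k → ℝ), (∑ i, lam i) = 0 →
    ∑ i, ∑ j, lam i * lam j * f (x i) (x j) ≤ 0

/-- Local Lipschitz bound for `rpow` around a positive point. -/
lemma rpow_lip {p a : ℝ} (hp : 0 < p) (ha : 0 < a) :
    ∃ L : ℝ, 0 ≤ L ∧ ∀ x ∈ Set.Icc (a / 2) (2 * a),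
      |x ^ p - a ^ p| ≤ L * |x - a| := by
  refine ⟨p * ((a / 2) ^ (p - 1) + (2 * a) ^ (p - 1)), by positivity, fun x hx => ?_⟩
  have ha2 : (0 : ℝ) < a / 2 := by linarith
  have hderiv : ∀ y ∈ Set.Icc (a / 2) (2 * a),
      HasDerivWithinAt (fun t : ℝ => t ^ p) (p * y ^ (p - 1)) (Set.Icc (a / 2) (2 * a)) y := by
    intro y hy
    have hy0 : y ≠ 0 := by
      have := hy.1; intro h; rw [h] at this; linarith
    exact (Real.hasDerivAt_rpow_const (Or.inl hy0)).hasDerivWithinAt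
  have hbound : ∀ y ∈ Set.Icc (a / 2) (2 * a),
      ‖p * y ^ (p - 1)‖ ≤ p * ((a / 2) ^ (p - 1) + (2 * a) ^ (p - 1)) := by
    intro y hy
    have hy0 : (0 : ℝ) < y := lt_of_lt_of_le ha2 hy.1
    rw [Real.norm_eq_abs, abs_mul, abs_of_pos hp, abs_of_pos (Real.rpow_pos_of_pos hy0 _)]
    rcases le_or_gt p 1 with hple | hpgt
    · have h1 : y ^ (p - 1) ≤ (a / 2) ^ (p - 1) :=
        Real.rpow_le_rpow_of_nonpos ha2 hy.1 (by linarith)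
      have h2 : (0 : ℝ) ≤ (2 * a) ^ (p - 1) :=
        (Real.rpow_pos_of_pos (by linarith) _).le
      nlinarith
    · have h1 : y ^ (p - 1) ≤ (2 * a) ^ (p - 1) :=
        Real.rpow_le_rpow hy0.le hy.2 (by linarith)
      have h2 : (0 : ℝ) ≤ (a / 2) ^ (p - 1) := (Real.rpow_pos_of_pos ha2 _).le
      nlinarith
  have ha_mem : a ∈ Set.Icc (a / 2) (2 * a) := ⟨by linarith, by linarith⟩
  have := (convex_Icc (a / 2) (2 * a)).norm_image_sub_le_of_norm_hasDerivWithin_le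
    hderiv hbound ha_mem hx
  simpa [Real.norm_eq_abs] using this

/-- Expansion of a symmetric quadratic form over `Fin (k+1)` by peeling off the last index. -/
lemma qf_expand {k : ℕ} (b : Fin (k + 1) → ℝ) (g : Fin (k + 1) → Fin (k + 1) → ℝ)
    (hsymm : ∀ i j, g i j = g j i) :
    ∑ i, ∑ j, b i * b j * g i j
      = (∑ i : Fin k, ∑ j : Fin k,
          b i.castSucc * b j.castSucc * g i.castSucc j.castSucc)
        + 2 * b (Fin.last k) * (∑ i : Fin k, b i.castSucc * g i.castSucc (Fin.last k))
        + b (Fin.last k) ^ 2 * g (Fin.last k) (Fin.last k) := by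
  have inner : ∀ i : Fin (k + 1), (∑ j, b i * b j * g i j)
      = (∑ j : Fin k, b i * b j.castSucc * g i j.castSucc)
        + b i * b (Fin.last k) * g i (Fin.last k) := fun i => Fin.sum_univ_castSucc _
  rw [Fin.sum_univ_castSucc (f := fun i => ∑ j, b i * b j * g i j)]
  simp only [inner]
  rw [Finset.sum_add_distrib]
  have e1 : (∑ j : Fin k, b (Fin.last k) * b j.castSucc * g (Fin.last k) j.castSucc)
      = ∑ i : Fin k, b i.castSucc * b (Fin.last k) * g i.castSucc (Fin.last k) := by
    refine Finset.sum_congr rfl fun j _ => ?_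
    rw [hsymm]; ring
  rw [e1]
  have e2 : 2 * b (Fin.last k) * (∑ i : Fin k, b i.castSucc * g i.castSucc (Fin.last k))
      = (∑ i : Fin k, b i.castSucc * b (Fin.last k) * g i.castSucc (Fin.last k))
        + ∑ i : Fin k, b i.castSucc * b (Fin.last k) * g i.castSucc (Fin.last k) := by
    have h : b (Fin.last k) * (∑ i : Fin k, b i.castSucc * g i.castSucc (Fin.last k))
        = ∑ i : Fin k, b i.castSucc * b (Fin.last k) * g i.castSucc (Fin.last k) := by
      rw [Finset.mul_sum]
      exact Finset.sum_congr rfl fun i _ => by ring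
    rw [← two_mul, mul_assoc, h]
  rw [e2]; ring

/-- an `H`-critical configuration admitting a second-order
perturbing sequence prevents `d^{2H}` from being negative definite. -/
theorem stmt0 {E : Type*} [MetricSpace E] {H : ℝ} (hH0 : 0 < H) (hH1 : H < 1)
    {n : ℕ} (hn : 1 ≤ n) (P : Fin (n + 1) → E) (hPinj : Function.Injective P)
    (c : Fin (n + 1) → ℝ) (hc : ∀ i, c i ≠ 0)
    (hsum : ∑ i, c i = 0)
    (hcrit : ∑ i, ∑ j, c i * c j * dist (P i) (P j) ^ (2 * H) = 0)
    (Q : ℕ → E) (ε : ℕ → ℝ) (hεpos : ∀ m, 0 < ε m)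
    (hε0 : Tendsto ε atTop (nhds 0))
    (C : ℝ) (hC : 0 ≤ C)
    (hQ : ∀ m, dist (P (Fin.last n)) (Q m) = ε m)
    (hQ' : ∀ m, ∀ i : Fin n,
      |dist (P i.castSucc) (Q m) - dist (P i.castSucc) (P (Fin.last n))| ≤ C * ε m ^ 2) :
    ¬ IsNegDefKernel (fun x y : E => dist x y ^ (2 * H)) ∧
    ∀ᶠ m in atTop,
      0 < ∑ i, ∑ j,
        (Fin.snoc (Function.update c (Fin.last n) (c (Fin.last n) / 2))
            (c (Fin.last n) / 2) : Fin (n + 2) → ℝ) i *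
        (Fin.snoc (Function.update c (Fin.last n) (c (Fin.last n) / 2))
            (c (Fin.last n) / 2) : Fin (n + 2) → ℝ) j *
        dist ((Fin.snoc P (Q m) : Fin (n + 2) → E) i)
             ((Fin.snoc P (Q m) : Fin (n + 2) → E) j) ^ (2 * H) := by
  have hp2H : (0 : ℝ) < 2 * H := by linarith
  set cL : ℝ := c (Fin.last n) with hcL
  set t : ℝ := cL / 2 with ht
  set b : Fin (n + 1) → ℝ := Function.update c (Fin.last n) t with hb
  set Sm : ℕ → ℝ := fun m => ∑ i, ∑ j,
      (Fin.snoc b t : Fin (n + 2) → ℝ) i * (Fin.snoc b t : Fin (n + 2) → ℝ) j *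
      dist ((Fin.snoc P (Q m) : Fin (n + 2) → E) i)
           ((Fin.snoc P (Q m) : Fin (n + 2) → E) j) ^ (2 * H) with hSm
  -- notation
  set A : ℝ := ∑ i : Fin n, c i.castSucc * dist (P i.castSucc) (P (Fin.last n)) ^ (2 * H)
    with hA
  set T : ℕ → ℝ := fun m => ∑ i : Fin n,
      c i.castSucc * (dist (P i.castSucc) (Q m) ^ (2 * H)
        - dist (P i.castSucc) (P (Fin.last n)) ^ (2 * H)) with hT
  have hbcs : ∀ i : Fin n, b i.castSucc = c i.castSucc := fun i =>
    Function.update_of_ne (Fin.castSucc_lt_last i).ne _ _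
  have hbL : b (Fin.last n) = t := Function.update_self _ _ _
  -- the key algebraic identity
  have key : ∀ m, Sm m = cL * T m + cL ^ 2 / 2 * ε m ^ (2 * H) := by
    intro m
    have hsymm2 : ∀ i j : Fin (n + 2),
        dist ((Fin.snoc P (Q m) : Fin (n + 2) → E) i)
          ((Fin.snoc P (Q m) : Fin (n + 2) → E) j) ^ (2 * H)
        = dist ((Fin.snoc P (Q m) : Fin (n + 2) → E) j)
          ((Fin.snoc P (Q m) : Fin (n + 2) → E) i) ^ (2 * H) := fun i j => by
      rw [dist_comm]
    have e0 := qf_expand (k := n + 1) (Fin.snoc b t)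
      (fun i j => dist ((Fin.snoc P (Q m) : Fin (n + 2) → E) i)
        ((Fin.snoc P (Q m) : Fin (n + 2) → E) j) ^ (2 * H)) hsymm2
    simp only [Fin.snoc_castSucc, Fin.snoc_last] at e0
    have hQQ : dist (Q m) (Q m) ^ (2 * H) = 0 := by
      rw [dist_self, Real.zero_rpow hp2H.ne']
    simp only [hQQ, mul_zero, add_zero] at e0
    have hsymm1 : ∀ i j : Fin (n + 1),
        dist (P i) (P j) ^ (2 * H) = dist (P j) (P i) ^ (2 * H) := fun i j => by
      rw [dist_comm]
    have e1 := qf_expand (k := n) b (fun i j => dist (P i) (P j) ^ (2 * H)) hsymm1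
    have hPP : dist (P (Fin.last n)) (P (Fin.last n)) ^ (2 * H) = 0 := by
      rw [dist_self, Real.zero_rpow hp2H.ne']
    simp only [hPP, mul_zero, add_zero] at e1
    have e2 := qf_expand (k := n) c (fun i j => dist (P i) (P j) ^ (2 * H)) hsymm1
    simp only [hPP, mul_zero, add_zero] at e2
    rw [hcrit] at e2
    -- e2 : 0 = S2 + 2 * cL * A
    have hS2 : (∑ i : Fin n, ∑ j : Fin n,
        c i.castSucc * c j.castSucc * dist (P i.castSucc) (P j.castSucc) ^ (2 * H))
        = -(2 * cL * A) := by rw [hA]; linarith [e2]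
    have hbsum : (∑ i : Fin (n + 1), b i * dist (P i) (Q m) ^ (2 * H))
        = (∑ i : Fin n, c i.castSucc * dist (P i.castSucc) (Q m) ^ (2 * H))
          + t * ε m ^ (2 * H) := by
      rw [Fin.sum_univ_castSucc (f := fun i => b i * dist (P i) (Q m) ^ (2 * H))]
      rw [hbL, hQ m]
      exact congrArg (· + t * ε m ^ (2 * H))
        (Finset.sum_congr rfl fun i _ => by rw [hbcs i])
    have e1' : (∑ i : Fin (n + 1), ∑ j : Fin (n + 1), b i * b j * dist (P i) (P j) ^ (2 * H))
        = -(2 * cL * A) + 2 * t * A := by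
      rw [e1, hbL]
      have : (∑ i : Fin n, ∑ j : Fin n,
          b i.castSucc * b j.castSucc * dist (P i.castSucc) (P j.castSucc) ^ (2 * H))
          = ∑ i : Fin n, ∑ j : Fin n,
            c i.castSucc * c j.castSucc * dist (P i.castSucc) (P j.castSucc) ^ (2 * H) :=
        Finset.sum_congr rfl fun i _ => Finset.sum_congr rfl fun j _ => by
          rw [hbcs i, hbcs j]
      rw [this, hS2]
      have : (∑ i : Fin n, b i.castSucc * dist (P i.castSucc) (P (Fin.last n)) ^ (2 * H)) = A := by
        rw [hA]; exact Finset.sum_congr rfl fun i _ => by rw [hbcs i]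
      rw [this]
    have hTm : T m = (∑ i : Fin n, c i.castSucc * dist (P i.castSucc) (Q m) ^ (2 * H)) - A := by
      rw [hT, hA]
      simp only [mul_sub]
      rw [Finset.sum_sub_distrib]
    rw [hSm]
    simp only
    rw [e0, e1', hbsum, hTm]
    rw [ht]
    ring
  -- distances from P i to P last are positive
  have hapos : ∀ i : Fin n, 0 < dist (P i.castSucc) (P (Fin.last n)) := by
    intro i
    rw [dist_pos]
    intro h
    exact (Fin.castSucc_lt_last i).ne (hPinj h)
  -- Lipschitz constants
  have hLip : ∀ i : Fin n, ∃ L : ℝ, 0 ≤ L ∧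
      ∀ x ∈ Set.Icc (dist (P i.castSucc) (P (Fin.last n)) / 2)
        (2 * dist (P i.castSucc) (P (Fin.last n))),
        |x ^ (2 * H) - dist (P i.castSucc) (P (Fin.last n)) ^ (2 * H)| ≤
          L * |x - dist (P i.castSucc) (P (Fin.last n))| :=
    fun i => rpow_lip hp2H (hapos i)
  choose Lip hLip0 hLipB using hLip
  set K : ℝ := ∑ i : Fin n, |c i.castSucc| * Lip i * C with hK
  have hK0 : 0 ≤ K := Finset.sum_nonneg fun i _ =>
    mul_nonneg (mul_nonneg (abs_nonneg _) (hLip0 i)) hC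
  -- eventually ε is small enough
  have hCε : Tendsto (fun m => C * ε m ^ 2) atTop (nhds 0) := by
    have := ((hε0.mul hε0).const_mul C)
    simpa [pow_two, mul_assoc] using this
  have hev1 : ∀ᶠ m in atTop, ∀ i : Fin n,
      C * ε m ^ 2 ≤ dist (P i.castSucc) (P (Fin.last n)) / 2 := by
    rw [Filter.eventually_all]
    intro i
    exact hCε.eventually_le_const (by linarith [hapos i])
  -- bound on T
  have hTbound : ∀ᶠ m in atTop, |T m| ≤ K * ε m ^ 2 := by
    filter_upwards [hev1] with m hm
    have hterm : ∀ i : Fin n,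
        |c i.castSucc * (dist (P i.castSucc) (Q m) ^ (2 * H)
          - dist (P i.castSucc) (P (Fin.last n)) ^ (2 * H))|
        ≤ |c i.castSucc| * Lip i * C * ε m ^ 2 := by
      intro i
      set a := dist (P i.castSucc) (P (Fin.last n)) with ha'
      set x := dist (P i.castSucc) (Q m) with hx'
      have h1 : |x - a| ≤ C * ε m ^ 2 := hQ' m i
      have h2 : C * ε m ^ 2 ≤ a / 2 := hm i
      have hxmem : x ∈ Set.Icc (a / 2) (2 * a) := by
        constructor
        · have := abs_le.1 h1
          linarith [this.1]
        · have := abs_le.1 h1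
          linarith [this.2]
      have h3 := hLipB i x hxmem
      rw [abs_mul]
      calc |c i.castSucc| * |x ^ (2 * H) - a ^ (2 * H)|
          ≤ |c i.castSucc| * (Lip i * |x - a|) :=
            mul_le_mul_of_nonneg_left h3 (abs_nonneg _)
        _ ≤ |c i.castSucc| * (Lip i * (C * ε m ^ 2)) := by
            have := mul_le_mul_of_nonneg_left h1 (hLip0 i)
            exact mul_le_mul_of_nonneg_left this (abs_nonneg _)
        _ = |c i.castSucc| * Lip i * C * ε m ^ 2 := by ring
    calc |T m| ≤ ∑ i : Fin n, |c i.castSucc * (dist (P i.castSucc) (Q m) ^ (2 * H)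
          - dist (P i.castSucc) (P (Fin.last n)) ^ (2 * H))| :=
        Finset.abs_sum_le_sum_abs _ _
      _ ≤ ∑ i : Fin n, |c i.castSucc| * Lip i * C * ε m ^ 2 :=
        Finset.sum_le_sum fun i _ => hterm i
      _ = K * ε m ^ 2 := by rw [hK, Finset.sum_mul]
  -- eventually the error is beaten
  have hcL0 : cL ≠ 0 := hc _
  have hεsm : Tendsto (fun m => |cL| * K * ε m ^ (2 - 2 * H)) atTop (nhds 0) := by
    have h1 : Tendsto (fun m => ε m ^ (2 - 2 * H)) atTop (nhds ((0:ℝ) ^ (2 - 2 * H))) :=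
      hε0.rpow_const (Or.inr (by linarith))
    rw [Real.zero_rpow (by linarith : (2 : ℝ) - 2 * H ≠ 0)] at h1
    have := h1.const_mul (|cL| * K)
    simpa [mul_assoc] using this
  have hev2 : ∀ᶠ m in atTop, |cL| * K * ε m ^ (2 - 2 * H) < cL ^ 2 / 2 :=
    hεsm.eventually_lt_const (by positivity)
  -- main positivity
  have hmain : ∀ᶠ m in atTop, 0 < Sm m := by
    filter_upwards [hTbound, hev2] with m h1 h2
    have hε' := hεpos m
    have hεp : 0 < ε m ^ (2 * H) := Real.rpow_pos_of_pos hε' _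
    have hsplit : ε m ^ 2 = ε m ^ (2 * H) * ε m ^ (2 - 2 * H) := by
      rw [← Real.rpow_add hε']
      rw [show 2 * H + (2 - 2 * H) = (2 : ℝ) by ring]
      rw [show ((2:ℝ)) = ((2:ℕ) : ℝ) by norm_num, Real.rpow_natCast]
    have hlow : cL * T m ≥ -(|cL| * (K * ε m ^ 2)) := by
      have h3 : |cL * T m| ≤ |cL| * (K * ε m ^ 2) := by
        rw [abs_mul]
        exact mul_le_mul_of_nonneg_left h1 (abs_nonneg _)
      linarith [neg_abs_le (cL * T m), (abs_le.1 h3).1]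
    rw [key m]
    have hq : |cL| * (K * ε m ^ 2) = |cL| * K * ε m ^ (2 - 2 * H) * ε m ^ (2 * H) := by
      rw [hsplit]; ring
    have : |cL| * K * ε m ^ (2 - 2 * H) * ε m ^ (2 * H) < cL ^ 2 / 2 * ε m ^ (2 * H) :=
      (mul_lt_mul_of_pos_right h2 hεp)
    nlinarith
  -- coefficients sum to zero
  have hsum' : (∑ i : Fin (n + 2), (Fin.snoc b t : Fin (n + 2) → ℝ) i) = 0 := by
    rw [Fin.sum_univ_castSucc (f := fun i => (Fin.snoc b t : Fin (n + 2) → ℝ) i)]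
    simp only [Fin.snoc_castSucc, Fin.snoc_last]
    rw [hb, Finset.sum_update_of_mem (Finset.mem_univ _)]
    rw [Finset.sdiff_singleton_eq_erase, Finset.sum_erase_eq_sub (Finset.mem_univ _)]
    rw [hsum, ← hcL, ht]
    ring
  constructor
  · intro hneg
    obtain ⟨m, hm⟩ := hmain.exists
    have := hneg (n + 2) (Fin.snoc P (Q m)) (Fin.snoc b t) hsum'
    rw [hSm] at hm
    simp only at hm this
    linarith
  · exact hmain
end

section
/- Let T > 0 and consider the circle AddCircle T = ℝ/Tℤ with its quotient metric. For any two points P, Q ∈ AddCircle T, set P* = P + (T/2) and Q* = Q + (T/2) (their antipodal points). Then, with the four points (x_1,x_2,x_3,x_4) = (P, Q, P*, Q*) and coefficients (c_1,c_2,c_3,c_4) = (1,−1,1,−1) (which sum to zero), one has ∑_{i,j=1}^4 c_i c_j · dist(x_i, x_j) = 0. -/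
open Finset

lemma coe_int_mul_period (T : ℝ) (k : ℤ) : ((k * T : ℝ) : AddCircle T) = 0 := by
  rw [← zsmul_eq_mul, AddCircle.coe_zsmul, AddCircle.coe_period, smul_zero]

lemma coe_add_int_mul (T x : ℝ) (k : ℤ) : ((x + k * T : ℝ) : AddCircle T) = (x : AddCircle T) := by
  rw [AddCircle.coe_add, coe_int_mul_period, add_zero]

lemma norm_add_half (T : ℝ) (hT : 0 < T) (x : AddCircle T) :
    ‖x + ((T / 2 : ℝ) : AddCircle T)‖ = T / 2 - ‖x‖ := by
  induction x using QuotientAddGroup.induction_on with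
  | H r₀ =>
    obtain ⟨r, hxr, hnorm, hrle⟩ :
        ∃ r : ℝ, ((r₀ : ℝ) : AddCircle T) = ((r : ℝ) : AddCircle T) ∧
          ‖((r₀ : ℝ) : AddCircle T)‖ = |r| ∧ |r| ≤ T / 2 := by
      refine ⟨r₀ - round (T⁻¹ * r₀) * T, ?_, AddCircle.norm_eq T, ?_⟩
      · rw [show r₀ - (round (T⁻¹ * r₀) : ℝ) * T = r₀ + (-round (T⁻¹ * r₀) : ℤ) * T by
          push_cast; ring, coe_add_int_mul]
      · have := AddCircle.norm_le_half_period (p := T) (x := ((r₀ : ℝ) : AddCircle T)) hT.ne'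
        rwa [AddCircle.norm_eq T, abs_of_pos hT] at this
    rw [abs_le] at hrle
    rw [hnorm, hxr]
    rcases le_or_gt r 0 with h | h
    · have heq : ((r : ℝ) : AddCircle T) + ((T / 2 : ℝ) : AddCircle T)
          = ((r + T / 2 : ℝ) : AddCircle T) := by rw [AddCircle.coe_add]
      rw [heq, AddCircle.norm_coe_eq_abs_iff (p := T) hT.ne' |>.2]
      · rw [abs_of_nonneg (by linarith), abs_of_nonpos h]; ring
      · rw [abs_of_pos hT, abs_of_nonneg (by linarith)]; linarith
    · have heq : ((r : ℝ) : AddCircle T) + ((T / 2 : ℝ) : AddCircle T)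
          = ((r - T / 2 : ℝ) : AddCircle T) := by
        rw [show (r - T / 2 : ℝ) = (r + T / 2) + (-1 : ℤ) * T by push_cast; ring,
          coe_add_int_mul, AddCircle.coe_add]
      rw [heq, AddCircle.norm_coe_eq_abs_iff (p := T) hT.ne' |>.2]
      · rw [abs_of_nonpos (by linarith), abs_of_pos h]; ring
      · rw [abs_of_pos hT, abs_of_nonpos (by linarith)]; linarith

/-- on the circle `ℝ/Tℤ`, two pairs of antipodal points with
alternating coefficients `±1` form a 1/2-critical configuration. -/
theorem stmt3 (T : ℝ) (hT : 0 < T) (P Q : AddCircle T) :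
    ∑ i, ∑ j,
      (![1, -1, 1, -1] : Fin 4 → ℝ) i * (![1, -1, 1, -1] : Fin 4 → ℝ) j *
        dist ((![P, Q, P + ((T / 2 : ℝ) : AddCircle T), Q + ((T / 2 : ℝ) : AddCircle T)] :
                Fin 4 → AddCircle T) i)
             ((![P, Q, P + ((T / 2 : ℝ) : AddCircle T), Q + ((T / 2 : ℝ) : AddCircle T)] :
                Fin 4 → AddCircle T) j) = 0 := by
  have key : ∀ x y : AddCircle T, dist x (y + ((T / 2 : ℝ) : AddCircle T)) = T / 2 - dist x y := by
    intro x y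
    rw [dist_eq_norm, dist_eq_norm]
    have hx : x - (y + ((T / 2 : ℝ) : AddCircle T))
        = (x - y) + ((-(T / 2) : ℝ) : AddCircle T) := by
      rw [show ((-(T / 2) : ℝ) : AddCircle T) = -(((T / 2 : ℝ)) : AddCircle T) by
        rw [AddCircle.coe_neg]]
      abel
    have hhalf : ((-(T / 2) : ℝ) : AddCircle T) = ((T / 2 : ℝ) : AddCircle T) := by
      rw [← coe_add_int_mul T (-(T / 2)) 1]; congr 1; push_cast; ring
    rw [hx, hhalf, norm_add_half T hT]
  have hself : ∀ x : AddCircle T, dist x (x + ((T / 2 : ℝ) : AddCircle T)) = T / 2 := by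
    intro x; rw [key, dist_self]; ring
  have hshift : ∀ x y : AddCircle T,
      dist (x + ((T / 2 : ℝ) : AddCircle T)) (y + ((T / 2 : ℝ) : AddCircle T)) = dist x y := by
    intro x y; rw [dist_eq_norm, dist_eq_norm]; congr 1; abel
  simp only [Fin.sum_univ_four, Matrix.cons_val_zero, Matrix.cons_val_one, Matrix.head_cons,
    Matrix.cons_val_two, Matrix.tail_cons, Matrix.cons_val_three]
  rw [hself P, hself Q, hshift P Q, hshift Q P, key P Q, key Q P,
    dist_comm (P + ((T / 2 : ℝ) : AddCircle T)) P, dist_comm (Q + ((T / 2 : ℝ) : AddCircle T)) P,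
    dist_comm (P + ((T / 2 : ℝ) : AddCircle T)) Q, dist_comm (Q + ((T / 2 : ℝ) : AddCircle T)) Q,
    hself P, hself Q, key P Q, key Q P, dist_comm Q P]
  simp only [dist_self]
  ring
end

section
/- Let a ≤ b be real numbers and let c : ℝ → EuclideanSpace ℝ (Fin 3) be continuously differentiable on [a,b] with ‖c(t)‖ ≥ 1 for all t ∈ [a,b]. Let Π(X) = ‖X‖⁻¹ • X be the normalization map. Then the length of Π ∘ c is at most the length of c: ∫_a^b ‖(Π ∘ c)'(t)‖ dt ≤ ∫_a^b ‖c'(t)‖ dt. -/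
/-!
The velocity of `c / ‖c‖` is `‖c‖⁻¹` times the component of `c'` orthogonal to `c`. An orthogonal
projection does not increase norms and `‖c‖⁻¹ ≤ 1` outside the unit ball, so the speed of the
projected curve is pointwise at most the speed of `c`; integrate.
-/

open Set MeasureTheory InnerProductSpace

section RadialProjection

variable {E : Type*} [NormedAddCommGroup E] [InnerProductSpace ℝ E] {f : ℝ → E} {f' : E} {t : ℝ}

theorem HasDerivAt.norm (hf : HasDerivAt f f' t) (h0 : f t ≠ 0) :
    HasDerivAt (fun s => ‖f s‖) (⟪f t, f'⟫_ℝ / ‖f t‖) t := by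
  have hsq : 0 < ‖f t‖ ^ 2 := by positivity
  convert hf.norm_sq.sqrt hsq.ne' using 1
  · simp only [Real.sqrt_sq (norm_nonneg _)]
  · rw [Real.sqrt_sq (norm_nonneg _)]
    field_simp

theorem HasDerivAt.norm_inv_smul (hf : HasDerivAt f f' t) (h0 : f t ≠ 0) :
    HasDerivAt (fun s => ‖f s‖⁻¹ • f s) (‖f t‖⁻¹ • (ℝ ∙ f t)ᗮ.starProjection f') t := by
  have hn : ‖f t‖ ≠ 0 := norm_ne_zero_iff.mpr h0
  refine (((hf.norm h0).inv hn).smul hf).congr_deriv ?_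
  rw [Submodule.starProjection_orthogonal_val, Submodule.starProjection_singleton, smul_sub,
    sub_eq_add_neg, ← neg_smul, smul_smul]
  congr 2
  simp only [RCLike.ofReal_real_eq_id, id]
  field_simp

theorem norm_deriv_norm_inv_smul_le (hf : HasDerivAt f f' t) (h1 : 1 ≤ ‖f t‖) :
    ‖deriv (fun s => ‖f s‖⁻¹ • f s) t‖ ≤ ‖f'‖ := by
  have h0 : f t ≠ 0 := norm_pos_iff.mp (zero_lt_one.trans_le h1)
  rw [(hf.norm_inv_smul h0).deriv, norm_smul, norm_inv, norm_norm]
  calc ‖f t‖⁻¹ * ‖(ℝ ∙ f t)ᗮ.starProjection f'‖ ≤ 1 * ‖f'‖ := by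
        gcongr
        · exact inv_le_one_of_one_le₀ h1
        · exact Submodule.norm_starProjection_apply_le _ _
    _ = ‖f'‖ := one_mul _

end RadialProjection

/-- for a C¹ curve `c` on `[a,b]` staying outside the open unit ball of
`ℝ³`, the radial projection `Π(X) = ‖X‖⁻¹ • X` onto the unit sphere does not
increase the length. -/
theorem stmt7 {a b : ℝ} (hab : a ≤ b)
    (c c' : ℝ → EuclideanSpace ℝ (Fin 3))
    (hderiv : ∀ t ∈ Icc a b, HasDerivAt c (c' t) t)
    (hcont : ContinuousOn c' (Icc a b))
    (hout : ∀ t ∈ Icc a b, 1 ≤ ‖c t‖) :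
    ∫ t in a..b, ‖deriv (fun s => ‖c s‖⁻¹ • c s) t‖ ≤ ∫ t in a..b, ‖c' t‖ := by
  rw [intervalIntegral.integral_of_le hab, intervalIntegral.integral_of_le hab]
  -- The projected speed need not be shown integrable: were it not, its integral would be `0`.
  refine integral_mono_of_nonneg (ae_of_all _ fun _ => norm_nonneg _)
    (hcont.norm.integrableOn_Icc.mono_set Ioc_subset_Icc_self) ?_
  refine (ae_restrict_iff' measurableSet_Ioc).2 (ae_of_all _ fun t ht => ?_)
  exact norm_deriv_norm_inv_smul_le (hderiv t (Ioc_subset_Icc_self ht))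
    (hout t (Ioc_subset_Icc_self ht))
end

section
/- Let a ≤ b be real numbers and let c : ℝ → EuclideanSpace ℝ (Fin 3) be continuously differentiable on [a,b] with ‖c(t)‖ ≥ 1 for all t ∈ [a,b] and ‖c(a)‖ = ‖c(b)‖ = 1. Then the length of c is at least the spherical (great-circle) distance between its endpoints: ∫_a^b ‖c'(t)‖ dt ≥ arccos ⟪c(a), c(b)⟫. -/
/-!
Radial projection `t ↦ ‖c t‖⁻¹ • c t` does not increase speed outside the unit ball: its velocity
is `‖c‖⁻¹` times the component of `c'` orthogonal to `c`. For a curve `γ` on the unit sphere, the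
angle `θ t` between `γ a` and `γ t` grows at most at speed `‖γ'‖`, because the derivative of
`cos θ = ⟪γ a, γ t⟫` is `⟪γ a, γ'⟫`, of size at most `sin θ * ‖γ'‖` as `γ' ⊥ γ`. To avoid the
singularities of `arccos`, this is run as a fencing argument for `cos θ` against `cos σ`, where `σ`
is the arc length plus a small linear margin, kept below `π`.
-/

open Set Real Filter Topology
open scoped RealInnerProductSpace

theorem hasDerivWithinAt_integral_Ici_of_continuousOn {g : ℝ → ℝ} {a b x : ℝ}
    (hg : ContinuousOn g (Icc a b)) (hx : x ∈ Ico a b) :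
    HasDerivWithinAt (fun t => ∫ s in a..t, g s) (g x) (Ici x) x := by
  have hmem : Icc a b ∈ 𝓝[>] x :=
    mem_of_superset (Ioo_mem_nhdsGT hx.2) fun z hz => ⟨hx.1.trans hz.1.le, hz.2.le⟩
  refine intervalIntegral.integral_hasDerivWithinAt_right ?_
    ⟨Icc a b, hmem, hg.aestronglyMeasurable measurableSet_Icc⟩
    ((hg x (Ico_subset_Icc_self hx)).mono_of_mem_nhdsWithin hmem)
  exact (hg.mono (Icc_subset_Icc_right hx.2.le)).intervalIntegrable_of_Icc hx.1

section

variable {E : Type*} [NormedAddCommGroup E] [InnerProductSpace ℝ E]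

theorem HasDerivAt.inv_norm_smul {c : ℝ → E} {c' : E} {t : ℝ} (hc : HasDerivAt c c' t)
    (h0 : c t ≠ 0) :
    HasDerivAt (fun s => ‖c s‖⁻¹ • c s) (‖c t‖⁻¹ • (ℝ ∙ c t)ᗮ.starProjection c') t := by
  have hpos : 0 < ‖c t‖ := norm_pos_iff.2 h0
  have hnorm : HasDerivAt (fun s => ‖c s‖) (⟪c t, c'⟫ / ‖c t‖) t := by
    have h := hc.norm_sq.sqrt (by positivity)
    simp only [Real.sqrt_sq (norm_nonneg _)] at h
    convert h using 1
    field_simp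
  refine ((hnorm.inv hpos.ne').smul hc).congr_deriv ?_
  rw [Submodule.starProjection_orthogonal_val, Submodule.starProjection_singleton]
  simp only [Pi.inv_apply, RCLike.ofReal_real_eq_id, id, smul_sub, smul_smul]
  match_scalars <;> field_simp

theorem HasDerivAt.inner_eq_zero_of_eventually_norm_eq {γ : ℝ → E} {v : E} {x : ℝ}
    (hγ : HasDerivAt γ v x) (h : ∀ᶠ t in 𝓝 x, ‖γ t‖ = ‖γ x‖) : ⟪γ x, v⟫ = 0 := by
  have hconst : HasDerivAt (‖γ ·‖ ^ 2) 0 x :=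
    (hasDerivAt_const x (‖γ x‖ ^ 2)).congr_of_eventuallyEq (h.mono fun t ht => by simp [ht])
  linarith [hγ.norm_sq.unique hconst]

theorem abs_inner_le_sqrt_one_sub_inner_sq_mul_norm {u v w : E} (hu : ‖u‖ = 1) (hv : ‖v‖ = 1)
    (hvw : ⟪v, w⟫ = 0) : |⟪u, w⟫| ≤ √(1 - ⟪u, v⟫ ^ 2) * ‖w‖ := by
  have hw : ⟪u, w⟫ = ⟪u - ⟪u, v⟫ • v, w⟫ := by
    rw [inner_sub_left, real_inner_smul_left, hvw, mul_zero, sub_zero]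
  have hnorm : ‖u - ⟪u, v⟫ • v‖ = √(1 - ⟪u, v⟫ ^ 2) := by
    rw [← Real.sqrt_sq (norm_nonneg _), norm_sub_sq_real, norm_smul, real_inner_smul_right, hu, hv,
      Real.norm_eq_abs, mul_one, sq_abs]
    ring_nf
  rw [hw, ← hnorm]
  exact abs_real_inner_le_norm _ _

theorem cos_le_inner_of_norm_deriv_lt {a b : ℝ} {γ γ' : ℝ → E} {σ σ' : ℝ → ℝ}
    (hγ : ∀ t ∈ Icc a b, HasDerivAt γ (γ' t) t) (hnorm : ∀ t ∈ Icc a b, ‖γ t‖ = 1)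
    (hσ : ContinuousOn σ (Icc a b)) (hσ' : ∀ x ∈ Ico a b, HasDerivWithinAt σ (σ' x) (Ici x) x)
    (hσ_mem : ∀ x ∈ Ico a b, σ x ∈ Ioo 0 π) (hspeed : ∀ x ∈ Ico a b, ‖γ' x‖ < σ' x) :
    ∀ y ∈ Icc a b, cos (σ y) ≤ ⟪γ a, γ y⟫ := by
  intro y hy
  have hγa : ⟪γ a, γ a⟫ = 1 := by
    rw [real_inner_self_eq_norm_sq, hnorm a ⟨le_rfl, hy.1.trans hy.2⟩, one_pow]
  have hf' : ∀ x ∈ Icc a b, HasDerivAt (fun t => -⟪γ a, γ t⟫) (-⟪γ a, γ' x⟫) x := fun x hx =>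
    ((hasDerivAt_const x (γ a)).inner ℝ (hγ x hx)).neg.congr_deriv (by simp)
  suffices -⟪γ a, γ y⟫ ≤ -cos (σ y) by linarith
  refine image_le_of_liminf_slope_right_lt_deriv_boundary' (f' := fun x => -⟪γ a, γ' x⟫)
    (B' := fun x => sin (σ x) * σ' x)
    (fun x hx => (hf' x hx).continuousAt.continuousWithinAt)
    (fun x hx r hr => (hf' x (Ico_subset_Icc_self hx)).hasDerivWithinAt.liminf_right_slope_le hr)
    (by rw [hγa]; exact neg_le_neg (cos_le_one _))
    (continuous_cos.comp_continuousOn hσ).neg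
    (fun x hx => ((hasDerivAt_cos _).comp_hasDerivWithinAt x (hσ' x hx)).neg.congr_deriv
      (by ring)) ?_ hy
  intro x hx htouch
  have hxI : x ∈ Icc a b := Ico_subset_Icc_self hx
  have hq : ⟪γ a, γ x⟫ = cos (σ x) := neg_inj.1 htouch
  have hsin : 0 < sin (σ x) := sin_pos_of_pos_of_lt_pi (hσ_mem x hx).1 (hσ_mem x hx).2
  have hxa : a < x := by
    refine hx.1.lt_of_ne fun hax => ?_
    subst hax
    rw [hγa] at hq
    nlinarith [sin_sq_add_cos_sq (σ a)]
  have horth : ⟪γ x, γ' x⟫ = 0 := by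
    refine (hγ x hxI).inner_eq_zero_of_eventually_norm_eq ?_
    filter_upwards [Icc_mem_nhds hxa hx.2] with t ht
    rw [hnorm t ht, hnorm x hxI]
  have hsqrt : √(1 - ⟪γ a, γ x⟫ ^ 2) = sin (σ x) := by
    rw [hq, ← sin_sq, sqrt_sq hsin.le]
  calc -⟪γ a, γ' x⟫ ≤ |⟪γ a, γ' x⟫| := neg_le_abs _
    _ ≤ sin (σ x) * ‖γ' x‖ := hsqrt ▸ abs_inner_le_sqrt_one_sub_inner_sq_mul_norm
        (hnorm a ⟨le_rfl, hxI.1.trans hxI.2⟩) (hnorm x hxI) horth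
    _ < sin (σ x) * σ' x := by gcongr; exact hspeed x hx

theorem cos_le_inner_of_norm_eq_one {a b ε : ℝ} (hab : a ≤ b) {γ γ' : ℝ → E} {g : ℝ → ℝ}
    (hγ : ∀ t ∈ Icc a b, HasDerivAt γ (γ' t) t) (hnorm : ∀ t ∈ Icc a b, ‖γ t‖ = 1)
    (hg : ContinuousOn g (Icc a b)) (hγ'g : ∀ t ∈ Icc a b, ‖γ' t‖ ≤ g t)
    (hε : 0 < ε) (hπ : (∫ t in a..b, g t) + ε ≤ π) :
    cos ((∫ t in a..b, g t) + ε) ≤ ⟪γ a, γ b⟫ := by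
  set κ := ε / (b - a + 1) with hκ_def
  set σ : ℝ → ℝ := fun t => (∫ s in a..t, g s) + κ * (t - a + 1) with hσ_def
  have hba : 0 < b - a + 1 := by linarith
  have hκ : 0 < κ := div_pos hε hba
  have hσb : σ b = (∫ t in a..b, g t) + ε := by
    simp only [hσ_def, hκ_def, div_mul_cancel₀ ε hba.ne']
  have hg0 : ∀ t ∈ Icc a b, 0 ≤ g t := fun t ht => (norm_nonneg _).trans (hγ'g t ht)
  have hσ_mem : ∀ x ∈ Ico a b, σ x ∈ Ioo 0 π := by
    intro x hx
    have hint : (∫ s in a..x, g s) ≤ ∫ s in a..b, g s :=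
      intervalIntegral.integral_mono_interval le_rfl hx.1 hx.2.le
        ((MeasureTheory.ae_restrict_iff' measurableSet_Ioc).2 (.of_forall fun t ht =>
          hg0 t (Ioc_subset_Icc_self ht))) (hg.intervalIntegrable_of_Icc hab)
    have hint0 : 0 ≤ ∫ s in a..x, g s := intervalIntegral.integral_nonneg hx.1
      fun t ht => hg0 t ⟨ht.1, ht.2.trans hx.2.le⟩
    have hlin0 : 0 < κ * (x - a + 1) := mul_pos hκ (by linarith [hx.1])
    have hlin : κ * (x - a + 1) < κ * (b - a + 1) := by gcongr; exact hx.2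
    rw [← hσb] at hπ
    simp only [hσ_def, mem_Ioo] at hπ ⊢
    constructor <;> linarith
  have hσ' : ∀ x ∈ Ico a b, HasDerivWithinAt σ (g x + κ) (Ici x) x := fun x hx =>
    ((hasDerivWithinAt_integral_Ici_of_continuousOn hg hx).add
      ((((hasDerivWithinAt_id x _).sub_const a).add_const 1).const_mul κ)).congr_deriv (by simp)
  have hσc : ContinuousOn σ (Icc a b) := by
    have hprim := intervalIntegral.continuousOn_primitive_interval (μ := MeasureTheory.volume)
      (a := a) (b := b) (f := g)
    rw [uIcc_of_le hab] at hprim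
    exact (hprim hg.integrableOn_Icc).add (by fun_prop)
  have hspeed : ∀ x ∈ Ico a b, ‖γ' x‖ < g x + κ := fun x hx => by
    linarith [hγ'g x (Ico_subset_Icc_self hx)]
  rw [← hσb]
  exact cos_le_inner_of_norm_deriv_lt hγ hnorm hσc hσ' hσ_mem hspeed b ⟨hab, le_rfl⟩

theorem arccos_inner_le_integral_of_norm_eq_one {a b : ℝ} (hab : a ≤ b) {γ γ' : ℝ → E}
    {g : ℝ → ℝ} (hγ : ∀ t ∈ Icc a b, HasDerivAt γ (γ' t) t) (hnorm : ∀ t ∈ Icc a b, ‖γ t‖ = 1)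
    (hg : ContinuousOn g (Icc a b)) (hγ'g : ∀ t ∈ Icc a b, ‖γ' t‖ ≤ g t) :
    arccos ⟪γ a, γ b⟫ ≤ ∫ t in a..b, g t := by
  refine le_of_forall_pos_le_add fun ε hε => ?_
  by_cases hπ : (∫ t in a..b, g t) + ε ≤ π
  · have hL : 0 ≤ ∫ t in a..b, g t :=
      intervalIntegral.integral_nonneg hab fun t ht => (norm_nonneg _).trans (hγ'g t ht)
    calc arccos ⟪γ a, γ b⟫
        ≤ arccos (cos ((∫ t in a..b, g t) + ε)) :=
          antitone_arccos (cos_le_inner_of_norm_eq_one hab hγ hnorm hg hγ'g hε hπ)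
      _ = (∫ t in a..b, g t) + ε := arccos_cos (by linarith) hπ
  · exact (arccos_le_pi _).trans (not_le.1 hπ).le

end

/-- a C¹ curve staying outside the open unit ball of `ℝ³` and joining
two points of the unit sphere is at least as long as the great-circle distance
between its endpoints. -/
theorem stmt9 {a b : ℝ} (hab : a ≤ b)
    (c c' : ℝ → EuclideanSpace ℝ (Fin 3))
    (hderiv : ∀ t ∈ Icc a b, HasDerivAt c (c' t) t)
    (hcont : ContinuousOn c' (Icc a b))
    (hout : ∀ t ∈ Icc a b, 1 ≤ ‖c t‖)
    (ha : ‖c a‖ = 1) (hb : ‖c b‖ = 1) :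
    Real.arccos ⟪c a, c b⟫ ≤ ∫ t in a..b, ‖c' t‖ := by
  have hc0 : ∀ t ∈ Icc a b, c t ≠ 0 := fun t ht => norm_pos_iff.1 (one_pos.trans_le (hout t ht))
  have hunit : ∀ t, ‖c t‖ = 1 → ‖c t‖⁻¹ • c t = c t := fun t ht => by rw [ht, inv_one, one_smul]
  have hproj : ∀ t ∈ Icc a b, ‖‖c t‖⁻¹ • (ℝ ∙ c t)ᗮ.starProjection (c' t)‖ ≤ ‖c' t‖ :=
    fun t ht => by
      rw [norm_smul, norm_inv, norm_norm]
      calc ‖c t‖⁻¹ * ‖(ℝ ∙ c t)ᗮ.starProjection (c' t)‖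
          ≤ 1 * ‖c' t‖ := by
            gcongr
            · exact inv_le_one_of_one_le₀ (hout t ht)
            · exact Submodule.norm_starProjection_apply_le _ _
        _ = ‖c' t‖ := one_mul _
  have key := arccos_inner_le_integral_of_norm_eq_one hab
    (fun t ht => (hderiv t ht).inv_norm_smul (hc0 t ht))
    (fun t ht => norm_smul_inv_norm (hc0 t ht)) hcont.norm hproj
  rwa [hunit a ha, hunit b hb] at key
end

section
/- Let d ≥ 1, H ∈ (0,1), n ≥ 1, let P_1,…,P_n ∈ EuclideanSpace ℝ (Fin d) be pairwise distinct points, and let c_1,…,c_n be real numbers, not all zero, with ∑_{i=1}^n c_i = 0. Then ∑_{i,j=1}^n c_i c_j ‖P_i − P_j‖^{2H} < 0. -/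
/-!
For `t > 0` the Gaussian kernel `exp (-t ‖x - y‖²)` is strictly positive definite:
`∑ cᵢ cⱼ exp (-t ‖Pᵢ - Pⱼ‖²)` is a positive multiple of `∫ ψ²`, where
`ψ = ∑ cᵢ exp (-2t ‖· - Pᵢ‖²)`, and `ψ ≠ 0` because the characters `exp ⟪w, ·⟫` with distinct `w`
are linearly independent. Subordination, `r ^ H = κ⁻¹ ∫₀^∞ (1 - exp (-t r)) t^(-1-H) dt`,
together with `∑ cᵢ = 0` then turns `∑ cᵢ cⱼ ‖Pᵢ - Pⱼ‖^(2H)` into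
`-κ⁻¹ ∫₀^∞ (∑ cᵢ cⱼ exp (-t ‖Pᵢ - Pⱼ‖²)) t^(-1-H) dt < 0`.
-/

open Finset MeasureTheory Set Real

section Gaussian

variable {V : Type*} [NormedAddCommGroup V] [InnerProductSpace ℝ V]

local notation "⟪" x ", " y "⟫" => @inner ℝ _ _ x y

noncomputable def expInnerChar (w : V) : Multiplicative V →* ℝ where
  toFun x := exp ⟪w, x.toAdd⟫
  map_one' := by simp
  map_mul' x y := by simp [inner_add_right, exp_add]

lemma expInnerChar_injective : Function.Injective (expInnerChar : V → Multiplicative V →* ℝ) := by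
  intro a b hab
  have h : ⟪a, a - b⟫ = ⟪b, a - b⟫ :=
    exp_injective (DFunLike.congr_fun hab (Multiplicative.ofAdd (a - b)))
  rw [← sub_eq_zero, ← inner_self_eq_zero (𝕜 := ℝ), inner_sub_left, h, sub_self]

lemma linearIndependent_exp_inner {ι : Type*} {w : ι → V} (hw : Function.Injective w) :
    LinearIndependent ℝ (fun i (x : V) => exp ⟪w i, x⟫) :=
  (linearIndependent_monoidHom (Multiplicative V) ℝ).comp _ (expInnerChar_injective.comp hw)

lemma two_mul_norm_sub_sq_add (x p q : V) :
    2 * ‖x - p‖ ^ 2 + 2 * ‖x - q‖ ^ 2 = ‖p - q‖ ^ 2 + 4 * ‖x - (2⁻¹ : ℝ) • (p + q)‖ ^ 2 := by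
  have hmid : (x - p) + (x - q) = (2 : ℝ) • (x - (2⁻¹ : ℝ) • (p + q)) := by module
  have h := parallelogram_law_with_norm ℝ (x - p) (x - q)
  rw [hmid, norm_smul, show (x - p) - (x - q) = -(p - q) by abel, norm_neg, mul_pow,
    Real.norm_two] at h
  linarith

variable {ι : Type*} [Fintype ι]

noncomputable def gaussianCombination (c : ι → ℝ) (P : ι → V) (s : ℝ) (x : V) : ℝ :=
  ∑ i, c i * exp (-s * ‖x - P i‖ ^ 2)

lemma exists_gaussianCombination_ne_zero {P : ι → V} (hP : Function.Injective P) {c : ι → ℝ}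
    (hc : c ≠ 0) {s : ℝ} (hs : s ≠ 0) : ∃ x, gaussianCombination c P s x ≠ 0 := by
  by_contra! h
  -- `-s ‖x - p‖² = -s ‖x‖² - s ‖p‖² + ⟪2 s p, x⟫`, so the `exp ⟪2 s P i, ·⟫` would be dependent
  have hw : Function.Injective fun i => (2 * s) • P i :=
    fun i j hij => hP (smul_right_injective V (mul_ne_zero two_ne_zero hs) hij)
  have hdep : ∑ i, (c i * exp (-s * ‖P i‖ ^ 2)) • (fun x : V => exp ⟪(2 * s) • P i, x⟫) = 0 := by
    funext x
    have hx := h x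
    have hsplit : ∀ i, exp (-s * ‖x - P i‖ ^ 2)
        = exp (-s * ‖x‖ ^ 2) * (exp (-s * ‖P i‖ ^ 2) * exp ⟪(2 * s) • P i, x⟫) := by
      intro i
      rw [← exp_add, ← exp_add, norm_sub_sq_real, real_inner_smul_left, real_inner_comm]
      ring_nf
    simp only [gaussianCombination, hsplit] at hx
    simp only [Finset.sum_apply, Pi.smul_apply, smul_eq_mul, Pi.zero_apply]
    refine (mul_eq_zero.mp ?_).resolve_left (exp_ne_zero (-s * ‖x‖ ^ 2))
    rw [← hx, Finset.mul_sum]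
    exact Finset.sum_congr rfl fun i _ => by ring
  have hzero := Fintype.linearIndependent_iff.mp (linearIndependent_exp_inner hw) _ hdep
  exact hc (funext fun i => (mul_eq_zero.mp (hzero i)).resolve_right (exp_ne_zero _))

lemma gaussianCombination_sq (c : ι → ℝ) (P : ι → V) (t : ℝ) (x : V) :
    gaussianCombination c P (2 * t) x ^ 2 = ∑ i, ∑ j, c i * c j * exp (-t * ‖P i - P j‖ ^ 2) *
      exp (-(4 * t) * ‖x - (2⁻¹ : ℝ) • (P i + P j)‖ ^ 2) := by
  rw [gaussianCombination, sq, Finset.sum_mul_sum]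
  refine Finset.sum_congr rfl fun i _ => Finset.sum_congr rfl fun j _ => ?_
  have h := two_mul_norm_sub_sq_add x (P i) (P j)
  rw [mul_mul_mul_comm, ← exp_add, mul_assoc (c i * c j), ← exp_add]
  congr 2
  linear_combination (-t) * h

section Integral

variable [FiniteDimensional ℝ V] [MeasurableSpace V] [BorelSpace V]

lemma integrable_exp_neg_mul_norm_sq {b : ℝ} (hb : 0 < b) :
    Integrable (fun x : V => exp (-b * ‖x‖ ^ 2)) := by
  refine (GaussianFourier.integrable_cexp_neg_mul_sq_norm_add (V := V)
      (b := (b : ℂ)) (by simpa using hb) 0 0).norm.congr (Filter.Eventually.of_forall fun x => ?_)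
  simp only [zero_mul, add_zero, Complex.norm_exp]
  norm_cast

lemma integrable_gaussianCombination_sq (c : ι → ℝ) (P : ι → V) {t : ℝ} (ht : 0 < t) :
    Integrable fun x => gaussianCombination c P (2 * t) x ^ 2 := by
  simp_rw [gaussianCombination_sq]
  exact integrable_finsetSum _ fun i _ => integrable_finsetSum _ fun j _ =>
    ((integrable_exp_neg_mul_norm_sq (by positivity)).comp_sub_right _).const_mul _

lemma integral_gaussianCombination_sq (c : ι → ℝ) (P : ι → V) {t : ℝ} (ht : 0 < t) :
    ∫ x, gaussianCombination c P (2 * t) x ^ 2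
      = (∑ i, ∑ j, c i * c j * exp (-t * ‖P i - P j‖ ^ 2)) * ∫ x : V, exp (-(4 * t) * ‖x‖ ^ 2) := by
  have hint : ∀ m : V, Integrable fun x : V => exp (-(4 * t) * ‖x - m‖ ^ 2) :=
    fun m => (integrable_exp_neg_mul_norm_sq (by positivity)).comp_sub_right m
  simp_rw [gaussianCombination_sq, Finset.sum_mul]
  rw [integral_finsetSum _ fun i _ => integrable_finsetSum _ fun j _ => (hint _).const_mul _]
  refine Finset.sum_congr rfl fun i _ => ?_
  rw [integral_finsetSum _ fun j _ => (hint _).const_mul _]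
  refine Finset.sum_congr rfl fun j _ => ?_
  rw [integral_const_mul, integral_sub_right_eq_self (fun x : V => exp (-(4 * t) * ‖x‖ ^ 2))]

theorem sum_mul_exp_neg_mul_norm_sub_sq_pos {P : ι → V} (hP : Function.Injective P) {c : ι → ℝ}
    (hc : c ≠ 0) {t : ℝ} (ht : 0 < t) :
    0 < ∑ i, ∑ j, c i * c j * exp (-t * ‖P i - P j‖ ^ 2) := by
  obtain ⟨x₀, hx₀⟩ := exists_gaussianCombination_ne_zero hP hc (by positivity : 2 * t ≠ 0)
  have hsq : 0 < ∫ x, gaussianCombination c P (2 * t) x ^ 2 :=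
    integral_pos_of_integrable_nonneg_nonzero (x := x₀)
      ((by unfold gaussianCombination; fun_prop : Continuous (gaussianCombination c P _)).pow 2)
      (integrable_gaussianCombination_sq c P ht) (fun x => sq_nonneg _)
      (pow_ne_zero 2 hx₀)
  have hK : 0 < ∫ x : V, exp (-(4 * t) * ‖x‖ ^ 2) := by
    rw [GaussianFourier.integral_rexp_neg_mul_sq_norm (by positivity)]
    positivity
  rw [integral_gaussianCombination_sq c P ht] at hsq
  exact pos_of_mul_pos_left hsq hK.le

end Integral

end Gaussian

lemma setIntegral_pos_of_pos_on {X : Type*} [MeasurableSpace X] {μ : Measure X} {s : Set X}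
    {f : X → ℝ} (hs : MeasurableSet s) (hμs : μ s ≠ 0) (hfi : IntegrableOn f s μ)
    (hf : ∀ x ∈ s, 0 < f x) : 0 < ∫ x in s, f x ∂μ := by
  rw [setIntegral_pos_iff_support_of_nonneg_ae
    (ae_restrict_of_forall_mem hs fun x hx => (hf x hx).le) hfi, inter_eq_right.mpr fun x hx => Function.mem_support.mpr (hf x hx).ne']
  exact pos_iff_ne_zero.mpr hμs

section Subordination

variable {H : ℝ}

lemma integrableOn_one_sub_exp_mul_rpow (hH0 : 0 < H) (hH1 : H < 1) {u : ℝ} (hu : 0 ≤ u) :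
    IntegrableOn (fun t : ℝ => (1 - exp (-t * u)) * t ^ (-1 - H)) (Ioi 0) := by
  have hmeas : ∀ {s : Set ℝ}, MeasurableSet s → s ⊆ Ioi 0 →
      AEStronglyMeasurable (fun t : ℝ => (1 - exp (-t * u)) * t ^ (-1 - H)) (volume.restrict s) :=
    fun hs hs0 => ContinuousOn.aestronglyMeasurable
      ((by fun_prop : Continuous fun t : ℝ => 1 - exp (-t * u)).continuousOn.mul
        (continuousOn_id.rpow_const fun t ht => Or.inl (hs0 ht).ne')) hs
  have hbound : ∀ t : ℝ, 0 < t → 0 ≤ 1 - exp (-t * u) ∧ 1 - exp (-t * u) ≤ min (t * u) 1 := by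
    intro t ht
    have h1 : exp (-t * u) ≤ 1 := exp_le_one_iff.mpr (by nlinarith)
    have h2 := add_one_le_exp (-t * u)
    exact ⟨by linarith, le_min (by linarith) (by linarith [exp_pos (-t * u)])⟩
  -- near `0` the integrand is `O(t^(-H))`, near `∞` it is `O(t^(-1-H))`
  rw [← Ioc_union_Ioi_eq_Ioi zero_le_one]
  refine IntegrableOn.union ?_ ?_
  · refine Integrable.mono' (g := fun t : ℝ => u * t ^ (-H)) ?_
      (hmeas measurableSet_Ioc Ioc_subset_Ioi_self) ?_
    · exact ((intervalIntegrable_iff_integrableOn_Ioc_of_le zero_le_one).mp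
        (intervalIntegral.intervalIntegrable_rpow' (by linarith))).const_mul u
    · filter_upwards [ae_restrict_mem measurableSet_Ioc] with t ⟨ht0, _⟩
      obtain ⟨hnn, hle⟩ := hbound t ht0
      have hpow : 0 < t ^ (-1 - H) := rpow_pos_of_pos ht0 _
      rw [norm_of_nonneg (mul_nonneg hnn hpow.le), show -H = 1 + (-1 - H) by ring,
        rpow_add ht0, rpow_one]
      nlinarith [min_le_left (t * u) 1]
  · refine Integrable.mono' (g := fun t : ℝ => t ^ (-1 - H))
      (integrableOn_Ioi_rpow_of_lt (by linarith) one_pos)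
      (hmeas measurableSet_Ioi fun t (ht : 1 < t) => zero_lt_one.trans ht) ?_
    filter_upwards [ae_restrict_mem measurableSet_Ioi] with t (ht : 1 < t)
    obtain ⟨hnn, hle⟩ := hbound t (zero_lt_one.trans ht)
    have hpow : 0 < t ^ (-1 - H) := rpow_pos_of_pos (zero_lt_one.trans ht) _
    rw [norm_of_nonneg (mul_nonneg hnn hpow.le)]
    nlinarith [min_le_right (t * u) 1]

noncomputable def subordinationConst (H : ℝ) : ℝ :=
  ∫ t in Ioi (0 : ℝ), (1 - exp (-t)) * t ^ (-1 - H)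

lemma subordinationConst_pos (hH0 : 0 < H) (hH1 : H < 1) : 0 < subordinationConst H := by
  refine setIntegral_pos_of_pos_on measurableSet_Ioi (by simp)
    (by simpa using integrableOn_one_sub_exp_mul_rpow hH0 hH1 zero_le_one) fun t (ht : 0 < t) => ?_
  exact mul_pos (by linarith [exp_lt_one_iff.mpr (neg_lt_zero.mpr ht)]) (rpow_pos_of_pos ht _)

lemma integral_one_sub_exp_mul_rpow (hH0 : 0 < H) {u : ℝ} (hu : 0 ≤ u) :
    ∫ t in Ioi (0 : ℝ), (1 - exp (-t * u)) * t ^ (-1 - H) = u ^ H * subordinationConst H := by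
  rcases hu.eq_or_lt with rfl | hu
  · simp [zero_rpow hH0.ne']
  have hsub := integral_comp_mul_left_Ioi (fun s => (1 - exp (-s)) * s ^ (-1 - H)) 0 hu
  have hscale : ∀ t ∈ Ioi (0 : ℝ), (1 - exp (-(u * t))) * (u * t) ^ (-1 - H)
      = u ^ (-1 - H) * ((1 - exp (-t * u)) * t ^ (-1 - H)) := fun t ht => by
    rw [mul_rpow hu.le (le_of_lt ht), neg_mul, mul_comm t u]
    ring
  rw [mul_zero, setIntegral_congr_fun measurableSet_Ioi hscale, integral_const_mul,
    smul_eq_mul, ← subordinationConst] at hsub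
  have hpow : u ^ (-1 - H) * u ^ H = u⁻¹ := by
    rw [← rpow_add hu, show -1 - H + H = -1 by ring, rpow_neg_one]
  refine mul_left_cancel₀ (rpow_pos_of_pos hu (-1 - H)).ne' ?_
  rw [hsub, ← mul_assoc, hpow]

theorem sum_mul_mul_rpow_neg {ι : Type*} [Fintype ι] (hH0 : 0 < H) (hH1 : H < 1)
    {c : ι → ℝ} (hsum : ∑ i, c i = 0) {r : ι → ι → ℝ} (hr : ∀ i j, 0 ≤ r i j)
    (hexp : ∀ t : ℝ, 0 < t → 0 < ∑ i, ∑ j, c i * c j * exp (-t * r i j)) :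
    ∑ i, ∑ j, c i * c j * r i j ^ H < 0 := by
  set F : ℝ → ℝ := fun t => ∑ i, ∑ j, c i * c j * ((1 - exp (-t * r i j)) * t ^ (-1 - H))
  have hterm : ∀ i j, IntegrableOn
      (fun t : ℝ => c i * c j * ((1 - exp (-t * r i j)) * t ^ (-1 - H))) (Ioi 0) :=
    fun i j => (integrableOn_one_sub_exp_mul_rpow hH0 hH1 (hr i j)).const_mul _
  have hF : ∀ t, F t = -((∑ i, ∑ j, c i * c j * exp (-t * r i j)) * t ^ (-1 - H)) := by
    intro t
    have hcc : ∑ i, ∑ j, c i * c j = 0 := by rw [← sum_mul_sum, hsum, zero_mul]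
    calc F t = ∑ i, ∑ j, (c i * c j * t ^ (-1 - H)
          - c i * c j * exp (-t * r i j) * t ^ (-1 - H)) :=
          Finset.sum_congr rfl fun i _ => Finset.sum_congr rfl fun j _ => by ring
      _ = (∑ i, ∑ j, c i * c j) * t ^ (-1 - H)
          - (∑ i, ∑ j, c i * c j * exp (-t * r i j)) * t ^ (-1 - H) := by
          simp only [sum_sub_distrib, sum_mul]
      _ = _ := by rw [hcc]; ring
  have hintF : ∫ t in Ioi (0 : ℝ), F t
      = (∑ i, ∑ j, c i * c j * r i j ^ H) * subordinationConst H := by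
    rw [integral_finsetSum _ fun i _ => integrable_finsetSum _ fun j _ => hterm i j, sum_mul]
    refine Finset.sum_congr rfl fun i _ => ?_
    rw [integral_finsetSum _ fun j _ => hterm i j, sum_mul]
    refine Finset.sum_congr rfl fun j _ => ?_
    rw [integral_const_mul, integral_one_sub_exp_mul_rpow hH0 (hr i j)]
    ring
  have hnegF : 0 < ∫ t in Ioi (0 : ℝ), -F t :=
    setIntegral_pos_of_pos_on measurableSet_Ioi (by simp)
      (integrable_finsetSum _ fun i _ => integrable_finsetSum _ fun j _ => hterm i j).neg
      fun t (ht : 0 < t) => by rw [hF, neg_neg]; exact mul_pos (hexp t ht) (rpow_pos_of_pos ht _)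
  rw [integral_neg, hintF, neg_pos] at hnegF
  exact neg_of_mul_neg_left hnegF (subordinationConst_pos hH0 hH1).le

end Subordination

theorem stmt10_general {d : ℕ} {H : ℝ} (hH0 : 0 < H) (hH1 : H < 1)
    {n : ℕ} (P : Fin n → EuclideanSpace ℝ (Fin d))
    (hPinj : Function.Injective P)
    (c : Fin n → ℝ) (hc : c ≠ 0) (hsum : ∑ i, c i = 0) :
    ∑ i, ∑ j, c i * c j * ‖P i - P j‖ ^ (2 * H) < 0 := by
  have hsq : ∀ x : ℝ, 0 ≤ x → x ^ (2 * H) = (x ^ 2) ^ H := fun x hx => by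
    rw [rpow_mul hx, rpow_two]
  simp_rw [hsq _ (norm_nonneg _)]
  exact sum_mul_mul_rpow_neg hH0 hH1 hsum (fun i j => sq_nonneg ‖P i - P j‖)
    fun t ht => sum_mul_exp_neg_mul_norm_sub_sq_pos hPinj hc ht

/-- strict negative definiteness of the kernel `‖x − y‖^{2H}` on `ℝ^d`
for `0 < H < 1`: there are no `H`-critical configurations in Euclidean space. -/
theorem stmt10 {d : ℕ} (hd : 1 ≤ d) {H : ℝ} (hH0 : 0 < H) (hH1 : H < 1)
    {n : ℕ} (hn : 1 ≤ n) (P : Fin n → EuclideanSpace ℝ (Fin d))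
    (hPinj : Function.Injective P)
    (c : Fin n → ℝ) (hc : c ≠ 0) (hsum : ∑ i, c i = 0) :
    ∑ i, ∑ j, c i * c j * ‖P i - P j‖ ^ (2 * H) < 0 :=
  stmt10_general hH0 hH1 P hPinj c hc hsum
end
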